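/- arXiv:2601.03428 — 3 statements merged into one kernel-verified Lean document; each statement's English description precedes it below -/
import Mathlib

section
/- Testing-an-innovation setup; assume (α ∈ (0,1) and r ∈ [0,1]) or (α = 0 and r = 1), and let q0 ∈ [0,1]. If δ is a treatment rule with δ(w̃) > 0 for some point w̃ ∈ [0,1]^N, then there exists a state (μ0, μ1) with q_{α,r}(μ0) = q0, where μ0 is a discrete measure supported on at most 2 points of [0,1] and μ1 is a discrete measure supported on at most N+1 points of [0,1], such that R(δ,(μ0,μ1)) = q0. -/
open MeasureTheory Set

noncomputable section

/-- The set of `α`-quantiles of a Borel probability measure on `[0,1]`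
(represented as a measure on `ℝ` giving mass 1 to `[0,1]`). -/
def quantSet (α : ℝ) (μ : Measure ℝ) : Set ℝ :=
  {q | q ∈ Icc (0 : ℝ) 1 ∧ α ≤ (μ (Icc 0 q)).toReal ∧ 1 - α ≤ (μ (Icc q 1)).toReal}

/-- The `(α, r)`-quantile of `μ`: `r · sup Q(α,μ) + (1 - r) · inf Q(α,μ)`. -/
def quant (α r : ℝ) (μ : Measure ℝ) : ℝ :=
  r * sSup (quantSet α μ) + (1 - r) * sInf (quantSet α μ)

/-- `μ` is a Borel probability measure concentrated on `[0,1]`. -/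
def IsProb01 (μ : Measure ℝ) : Prop :=
  IsProbabilityMeasure μ ∧ μ (Icc (0 : ℝ) 1) = 1

/-- The mixture `p · μ1 + (1 - p) · μ0`. -/
def mix (p : ℝ) (μ0 μ1 : Measure ℝ) : Measure ℝ :=
  ENNReal.ofReal p • μ1 + ENNReal.ofReal (1 - p) • μ0

/-- The "Bernoulli" measure on `[0,1]`: mass `a` at `0` and mass `1 - a` at `1`. -/
def Ber (a : ℝ) : Measure ℝ :=
  ENNReal.ofReal a • Measure.dirac (0 : ℝ) + ENNReal.ofReal (1 - a) • Measure.dirac (1 : ℝ)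

/-- Law of the sample in the testing-an-innovation design: `N` i.i.d. draws from `μ1`. -/
def sampleLawTI (N : ℕ) (μ1 : Measure ℝ) : Measure (Fin N → ℝ) :=
  Measure.pi fun _ => μ1

/-- Regret of a treatment rule in the testing-an-innovation design, with known
`α`-quantile `q0` of the control distribution `μ0`. -/
def regretTI (α r : ℝ) (N : ℕ) (q0 : ℝ) (δ : (Fin N → ℝ) → ℝ)
    (μ0 μ1 : Measure ℝ) : ℝ :=
  max q0 (quant α r μ1) -
    quant α r (mix (∫ w, δ w ∂(sampleLawTI N μ1)) μ0 μ1)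

/-- The set of regret values of the rule `δ` over all states with `q_{α,r}(μ0) = q0`. -/
def regretSetTI (α r : ℝ) (N : ℕ) (q0 : ℝ) (δ : (Fin N → ℝ) → ℝ) : Set ℝ :=
  {v | ∃ μ0 μ1 : Measure ℝ, IsProb01 μ0 ∧ IsProb01 μ1 ∧ quant α r μ0 = q0 ∧
      v = regretTI α r N q0 δ μ0 μ1}

open scoped ENNReal

open Classical in
lemma pair_apply_toReal (a b x y : ℝ) (ha : 0 ≤ a) (hb : 0 ≤ b) (s : Set ℝ) :
    ((ENNReal.ofReal a • Measure.dirac x + ENNReal.ofReal b • Measure.dirac y) s).toReal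
      = (if x ∈ s then a else 0) + (if y ∈ s then b else 0) := by
  rw [Measure.add_apply, Measure.smul_apply, Measure.smul_apply, Measure.dirac_apply,
    Measure.dirac_apply, smul_eq_mul, smul_eq_mul, Set.indicator_apply, Set.indicator_apply]
  split_ifs <;>
  simp [ENNReal.toReal_add, ENNReal.toReal_ofReal, ha, hb]

open Classical in
lemma dirac_apply_toReal (x : ℝ) (s : Set ℝ) :
    ((Measure.dirac x) s).toReal = if x ∈ s then 1 else 0 := by
  rw [Measure.dirac_apply, Set.indicator_apply]
  split_ifs <;> simp

lemma quantSet_eq_singleton_zero {α : ℝ} {μ : Measure ℝ} (hμ : IsProb01 μ)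
    (hα : 0 ≤ α) (h0 : α < (μ {0}).toReal) : quantSet α μ = {0} := by
  haveI := hμ.1
  ext q
  simp only [quantSet, mem_setOf_eq, mem_singleton_iff]
  constructor
  · rintro ⟨⟨hq0, hq1⟩, _, h2⟩
    by_contra hne
    have hqpos : 0 < q := lt_of_le_of_ne hq0 (Ne.symm hne)
    have hdisj : Disjoint ({0} : Set ℝ) (Icc q 1) :=
      Set.disjoint_singleton_left.mpr (fun h' => by
        simp only [mem_Icc] at h'; linarith [h'.1])
    have hsum : μ {0} + μ (Icc q 1) ≤ 1 := by
      rw [← measure_union hdisj measurableSet_Icc]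
      calc μ _ ≤ μ univ := measure_mono (subset_univ _)
        _ = 1 := measure_univ
    have h1ne : μ {0} ≠ ⊤ := measure_ne_top μ _
    have h2ne : μ (Icc q 1) ≠ ⊤ := measure_ne_top μ _
    have hR : (μ {0}).toReal + (μ (Icc q 1)).toReal ≤ 1 := by
      rw [← ENNReal.toReal_add h1ne h2ne]
      simpa using ENNReal.toReal_mono (by simp) hsum
    linarith
  · rintro rfl
    refine ⟨⟨le_refl 0, zero_le_one⟩, ?_, ?_⟩
    · rw [Icc_self]; linarith
    · rw [hμ.2]; simp; linarith

lemma quant_eq_zero {α r : ℝ} {μ : Measure ℝ} (hμ : IsProb01 μ)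
    (hα : 0 ≤ α) (h0 : α < (μ {0}).toReal) : quant α r μ = 0 := by
  rw [quant, quantSet_eq_singleton_zero hμ hα h0, csSup_singleton, csInf_singleton]; ring

lemma quant_pair {α r a q0 : ℝ} (hα0 : 0 < α) (hα1 : α < 1) (ha0 : 0 ≤ a) (ha : a < α)
    (hq0 : 0 ≤ q0) (hq1 : q0 ≤ 1) :
    quant α r (ENNReal.ofReal a • Measure.dirac 0 + ENNReal.ofReal (1 - a) • Measure.dirac q0)
      = q0 := by
  have hb : (0:ℝ) ≤ 1 - a := by linarith
  have hset : quantSet α (ENNReal.ofReal a • Measure.dirac 0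
      + ENNReal.ofReal (1 - a) • Measure.dirac q0) = {q0} := by
    ext q
    simp only [quantSet, mem_setOf_eq, mem_singleton_iff]
    constructor
    · rintro ⟨⟨hq0', hq1'⟩, h1, h2⟩
      rw [pair_apply_toReal a (1-a) 0 q0 ha0 hb] at h1
      rw [pair_apply_toReal a (1-a) 0 q0 ha0 hb] at h2
      by_contra hne
      rcases lt_or_gt_of_ne hne with hlt | hgt
      · rw [if_pos (show (0:ℝ) ∈ Icc 0 q from ⟨le_refl 0, hq0'⟩),
          if_neg (show q0 ∉ Icc 0 q from fun hc => by
            simp only [mem_Icc] at hc; linarith [hc.2])] at h1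
        linarith
      · rw [if_neg (show (0:ℝ) ∉ Icc q 1 from fun hc => by
            simp only [mem_Icc] at hc; linarith [hc.1]),
          if_neg (show q0 ∉ Icc q 1 from fun hc => by
            simp only [mem_Icc] at hc; linarith [hc.1])] at h2
        linarith
    · rintro rfl
      refine ⟨⟨hq0, hq1⟩, ?_, ?_⟩ <;> rw [pair_apply_toReal a (1-a) 0 q ha0 hb]
      · rw [if_pos (show (0:ℝ) ∈ Icc 0 q from ⟨le_refl 0, hq0⟩),
          if_pos (show q ∈ Icc 0 q from ⟨hq0, le_refl q⟩)]
        linarith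
      · rw [if_pos (show q ∈ Icc q 1 from ⟨le_refl q, hq1⟩)]
        split_ifs <;> linarith
  rw [quant, hset, csSup_singleton, csInf_singleton]; ring

lemma quant_dirac_zero (q0 : ℝ) (hq0 : 0 ≤ q0) (hq1 : q0 ≤ 1) :
    quant 0 1 (Measure.dirac q0) = q0 := by
  have hset : quantSet 0 (Measure.dirac q0) = Icc 0 q0 := by
    ext q
    simp only [quantSet, mem_setOf_eq, mem_Icc]
    constructor
    · rintro ⟨⟨h1, h2⟩, _, h3⟩
      refine ⟨h1, ?_⟩
      by_contra hgt
      push_neg at hgt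
      rw [dirac_apply_toReal, if_neg (show q0 ∉ Icc q 1 from fun hc => by
        simp only [mem_Icc] at hc; linarith [hc.1])] at h3
      linarith
    · rintro ⟨h1, h2⟩
      refine ⟨⟨h1, le_trans h2 hq1⟩, by positivity, ?_⟩
      rw [dirac_apply_toReal, if_pos (show q0 ∈ Icc q 1 from ⟨h2, hq1⟩)]
      norm_num
  rw [quant, hset, csSup_Icc hq0]
  ring

def atomMeas (m : ℝ) (N : ℕ) (u : Fin (N+1) → ℝ) : Measure ℝ :=
  ENNReal.ofReal m • Measure.dirac 0 +
    ENNReal.ofReal (1-m) • (((N+1 : ℕ) : ℝ≥0∞)⁻¹ • ∑ i, Measure.dirac (u i))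

lemma atomMeas_full {m : ℝ} (hm0 : 0 ≤ m) (hm1 : m ≤ 1) {N : ℕ} {u : Fin (N+1) → ℝ}
    {s : Set ℝ} (h0 : (0:ℝ) ∈ s) (hu : ∀ i, u i ∈ s) : atomMeas m N u s = 1 := by
  have hNne : ((N+1 : ℕ) : ℝ≥0∞) ≠ 0 := by
    simp
  rw [atomMeas, Measure.add_apply, Measure.smul_apply, Measure.smul_apply, Measure.smul_apply,
    Measure.finset_sum_apply, Measure.dirac_apply_of_mem h0]
  have hsum : ∑ i : Fin (N+1), Measure.dirac (u i) s = ((N+1 : ℕ) : ℝ≥0∞) := by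
    rw [Finset.sum_congr rfl (fun i _ => Measure.dirac_apply_of_mem (hu i))]
    simp [Finset.card_univ]
  rw [hsum, smul_eq_mul, smul_eq_mul, smul_eq_mul,
    ENNReal.inv_mul_cancel hNne (ENNReal.natCast_ne_top _), mul_one, mul_one,
    ← ENNReal.ofReal_add hm0 (by linarith)]
  norm_num

lemma atomMeas_isProb01 {m : ℝ} (hm0 : 0 ≤ m) (hm1 : m ≤ 1) {N : ℕ} {u : Fin (N+1) → ℝ}
    (hu : ∀ i, u i ∈ Icc (0:ℝ) 1) : IsProb01 (atomMeas m N u) :=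
  ⟨⟨atomMeas_full hm0 hm1 (mem_univ _) (fun i => mem_univ _)⟩,
   atomMeas_full hm0 hm1 ⟨le_refl 0, zero_le_one⟩ hu⟩

lemma atomMeas_zero_le {m : ℝ} {N : ℕ} {u : Fin (N+1) → ℝ} :
    ENNReal.ofReal m ≤ atomMeas m N u {0} := by
  rw [atomMeas, Measure.add_apply, Measure.smul_apply,
    Measure.dirac_apply_of_mem (mem_singleton (0:ℝ)), smul_eq_mul, mul_one]
  exact le_self_add

lemma atomMeas_atom_ne_zero {m : ℝ} (hm1 : m < 1) {N : ℕ} {u : Fin (N+1) → ℝ}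
    (i : Fin (N+1)) : atomMeas m N u {u i} ≠ 0 := by
  have h1 : (1:ℝ≥0∞) ≤ ∑ j : Fin (N+1), Measure.dirac (u j) {u i} := by
    have h := Finset.single_le_sum (f := fun j => Measure.dirac (u j) ({u i} : Set ℝ))
      (fun j _ => zero_le) (Finset.mem_univ i)
    simpa [Measure.dirac_apply_of_mem (mem_singleton (u i))] using h
  have h2 : ENNReal.ofReal (1-m) * (((N+1 : ℕ) : ℝ≥0∞)⁻¹ * 1) ≤ atomMeas m N u {u i} := by
    rw [atomMeas, Measure.add_apply, Measure.smul_apply, Measure.smul_apply, Measure.smul_apply,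
      Measure.finset_sum_apply, smul_eq_mul, smul_eq_mul, smul_eq_mul]
    exact le_add_left (mul_le_mul_right (mul_le_mul_right h1 _) _)
  have hpos : (0:ℝ≥0∞) < ENNReal.ofReal (1-m) * (((N+1 : ℕ) : ℝ≥0∞)⁻¹ * 1) := by
    rw [mul_one]
    exact ENNReal.mul_pos (by simp [ENNReal.ofReal_pos]; linarith)
      (by simp [pos_iff_ne_zero, ENNReal.inv_ne_zero, ENNReal.natCast_ne_top])
  exact (lt_of_lt_of_le hpos h2).ne'

/-- testing an innovation; if `δ(w̃) > 0` for some `w̃ ∈ [0,1]^N`, there is a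
state `(μ0, μ1)` with `q_{α,r}(μ0) = q0`, `μ0` discrete with at most 2 support points in
`[0,1]` and `μ1` discrete with at most `N + 1` support points in `[0,1]`, whose regret is
exactly `q0`. -/
theorem stmt11 (α r : ℝ)
    (h : (α ∈ Ioo (0 : ℝ) 1 ∧ r ∈ Icc (0 : ℝ) 1) ∨ (α = 0 ∧ r = 1))
    (N : ℕ) (q0 : ℝ) (hq01 : q0 ∈ Icc (0 : ℝ) 1)
    (δ : (Fin N → ℝ) → ℝ) (hδm : Measurable δ) (hδ : ∀ w, δ w ∈ Icc (0 : ℝ) 1)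
    (hpos : ∃ wt : Fin N → ℝ, (∀ i, wt i ∈ Icc (0 : ℝ) 1) ∧ 0 < δ wt) :
    ∃ μ0 μ1 : Measure ℝ, IsProb01 μ0 ∧ IsProb01 μ1 ∧ quant α r μ0 = q0 ∧
      (∃ s : Finset ℝ, s.card ≤ 2 ∧ ↑s ⊆ Icc (0 : ℝ) 1 ∧ μ0 ↑s = 1) ∧
      (∃ s : Finset ℝ, s.card ≤ N + 1 ∧ ↑s ⊆ Icc (0 : ℝ) 1 ∧ μ1 ↑s = 1) ∧
      regretTI α r N q0 δ μ0 μ1 = q0 := by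
  obtain ⟨wt, hwtm, hwtpos⟩ := hpos
  have hα0 : 0 ≤ α := by
    rcases h with ⟨⟨h1, _⟩, _⟩ | ⟨rfl, _⟩
    exacts [le_of_lt h1, le_refl 0]
  have hα1 : α < 1 := by
    rcases h with ⟨⟨_, h2⟩, _⟩ | ⟨rfl, _⟩
    exacts [h2, one_pos]
  set m : ℝ := (α + 1) / 2 with hm
  have hmα : α < m := by rw [hm]; linarith
  have hm1 : m < 1 := by rw [hm]; linarith
  have hm0 : 0 < m := by linarith
  set u : Fin (N+1) → ℝ := Fin.cons 0 wt with hu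
  have hu01 : ∀ i, u i ∈ Icc (0:ℝ) 1 := by
    intro i
    refine Fin.cases ?_ ?_ i
    · simp [hu]
    · intro j
      simpa [hu] using hwtm j
  set μ1 := atomMeas m N u with hμ1
  have hμ1P : IsProb01 μ1 := atomMeas_isProb01 hm0.le hm1.le hu01
  haveI := hμ1P.1
  have hμ1ne : ∀ s : Set ℝ, μ1 s ≠ ⊤ := fun s => measure_ne_top _ _
  have hμ1_0 : m ≤ (μ1 {0}).toReal := by
    have h2 := ENNReal.toReal_mono (hμ1ne _) (atomMeas_zero_le (m := m) (N := N) (u := u))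
    rwa [ENNReal.toReal_ofReal hm0.le] at h2
  haveI : IsProbabilityMeasure (sampleLawTI N μ1) := by
    rw [sampleLawTI]; infer_instance
  have hδint : Integrable δ (sampleLawTI N μ1) := by
    refine (integrable_const (1:ℝ)).mono' hδm.aestronglyMeasurable ?_
    filter_upwards with w
    rw [Real.norm_eq_abs, abs_of_nonneg (hδ w).1]
    exact (hδ w).2
  set p := ∫ w, δ w ∂(sampleLawTI N μ1) with hp
  have hp1 : p ≤ 1 := by
    rw [hp]
    calc ∫ w, δ w ∂(sampleLawTI N μ1) ≤ ∫ _w, (1:ℝ) ∂(sampleLawTI N μ1) :=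
          integral_mono hδint (integrable_const 1) (fun w => (hδ w).2)
      _ = 1 := by simp
  have hms : MeasurableSet ({wt} : Set (Fin N → ℝ)) := measurableSet_singleton wt
  have hΛwt : 0 < ((sampleLawTI N μ1) {wt}).toReal := by
    have heq : (sampleLawTI N μ1) {wt} = ∏ i, μ1 {wt i} := by
      rw [sampleLawTI, show ({wt} : Set (Fin N → ℝ)) = Set.pi univ (fun i => {wt i}) from by
        ext w; simp [funext_iff, Set.mem_pi], Measure.pi_pi]
    rw [heq]
    refine ENNReal.toReal_pos ?_ (ENNReal.prod_ne_top fun i _ => hμ1ne _)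
    refine (CanonicallyOrderedAdd.prod_pos.mpr (fun i _ => ?_)).ne'
    have hws : wt i = u i.succ := by simp [hu]
    rw [hws]
    exact pos_iff_ne_zero.mpr (atomMeas_atom_ne_zero hm1 i.succ)
  have hp0 : 0 < p := by
    have hge : ((sampleLawTI N μ1) {wt}).toReal * δ wt ≤ p := by
      rw [hp]
      calc ((sampleLawTI N μ1) {wt}).toReal * δ wt
          = ∫ w, ({wt} : Set (Fin N → ℝ)).indicator (fun _ => δ wt) w ∂(sampleLawTI N μ1) := by
            rw [integral_indicator_const _ hms, smul_eq_mul, measureReal_def]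
        _ ≤ ∫ w, δ w ∂(sampleLawTI N μ1) := by
            refine integral_mono ((integrable_const (δ wt)).indicator hms) hδint (fun w => ?_)
            by_cases hw : w ∈ ({wt} : Set (Fin N → ℝ))
            · rw [Set.indicator_of_mem hw]
              rw [mem_singleton_iff] at hw
              rw [hw]
            · rw [Set.indicator_of_notMem hw]
              exact (hδ w).1
    exact lt_of_lt_of_le (mul_pos hΛwt hwtpos) hge
  set a := max 0 (α - p * (m - α) / 2) with ha
  have ha0 : 0 ≤ a := le_max_left _ _
  have haα : a ≤ α := max_le hα0 (by nlinarith)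
  have ha1 : a ≤ 1 := le_trans haα hα1.le
  set μ0 : Measure ℝ :=
    ENNReal.ofReal a • Measure.dirac 0 + ENNReal.ofReal (1-a) • Measure.dirac q0 with hμ0
  have hμ0full : ∀ s : Set ℝ, (0:ℝ) ∈ s → q0 ∈ s → μ0 s = 1 := by
    intro s h0s hqs
    rw [hμ0, Measure.add_apply, Measure.smul_apply, Measure.smul_apply,
      Measure.dirac_apply_of_mem h0s, Measure.dirac_apply_of_mem hqs, smul_eq_mul, smul_eq_mul,
      mul_one, mul_one, ← ENNReal.ofReal_add ha0 (by linarith)]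
    norm_num
  have hμ0P : IsProb01 μ0 :=
    ⟨⟨hμ0full univ (mem_univ _) (mem_univ _)⟩, hμ0full _ ⟨le_refl 0, zero_le_one⟩ hq01⟩
  haveI := hμ0P.1
  have hμ0ne : ∀ s : Set ℝ, μ0 s ≠ ⊤ := fun s => measure_ne_top _ _
  have hμ0_0 : a ≤ (μ0 {0}).toReal := by
    have hle : ENNReal.ofReal a ≤ μ0 {0} := by
      rw [hμ0, Measure.add_apply, Measure.smul_apply,
        Measure.dirac_apply_of_mem (mem_singleton (0:ℝ)), smul_eq_mul, mul_one]
      exact le_self_add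
    have h2 := ENNReal.toReal_mono (hμ0ne _) hle
    rwa [ENNReal.toReal_ofReal ha0] at h2
  have hq0eq : quant α r μ0 = q0 := by
    rcases h with ⟨⟨hαp, _⟩, _⟩ | ⟨hA, hR⟩
    · have haα' : a < α := max_lt hαp (by nlinarith)
      exact quant_pair hαp hα1 ha0 haα' hq01.1 hq01.2
    · have haz : a = 0 := by
        rw [ha, hA]
        apply max_eq_left
        nlinarith
      rw [hμ0, haz, hA, hR]
      simpa using quant_dirac_zero q0 hq01.1 hq01.2
  have hqμ1 : quant α r μ1 = 0 := quant_eq_zero hμ1P hα0 (lt_of_lt_of_le hmα hμ1_0)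
  set ν := mix p μ0 μ1 with hν
  have hνfull : ∀ s : Set ℝ, μ1 s = 1 → μ0 s = 1 → ν s = 1 := by
    intro s h1 h2
    rw [hν, mix, Measure.add_apply, Measure.smul_apply, Measure.smul_apply, h1, h2,
      smul_eq_mul, smul_eq_mul, mul_one, mul_one, ← ENNReal.ofReal_add hp0.le (by linarith)]
    norm_num
  have hνP : IsProb01 ν :=
    ⟨⟨hνfull univ measure_univ (hμ0full univ (mem_univ _) (mem_univ _))⟩,
     hνfull _ hμ1P.2 hμ0P.2⟩
  have hν0 : α < (ν {0}).toReal := by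
    have happly : (ν {0}).toReal = p * (μ1 {0}).toReal + (1-p) * (μ0 {0}).toReal := by
      rw [hν, mix, Measure.add_apply, Measure.smul_apply, Measure.smul_apply,
        smul_eq_mul, smul_eq_mul,
        ENNReal.toReal_add (ENNReal.mul_ne_top ENNReal.ofReal_ne_top (hμ1ne _))
          (ENNReal.mul_ne_top ENNReal.ofReal_ne_top (hμ0ne _)),
        ENNReal.toReal_mul, ENNReal.toReal_mul,
        ENNReal.toReal_ofReal hp0.le, ENNReal.toReal_ofReal (by linarith)]
    rw [happly]
    have hkey : α - p * (m - α) / 2 ≤ a := le_max_right _ _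
    nlinarith [mul_le_mul_of_nonneg_left hμ1_0 hp0.le,
      mul_le_mul_of_nonneg_left hμ0_0 (by linarith : (0:ℝ) ≤ 1 - p),
      mul_le_mul_of_nonneg_left hkey (by linarith : (0:ℝ) ≤ 1 - p)]
  have hqν : quant α r ν = 0 := quant_eq_zero hνP hα0 hν0
  refine ⟨μ0, μ1, hμ0P, hμ1P, hq0eq, ?_, ?_, ?_⟩
  · refine ⟨{0, q0}, ?_, ?_, ?_⟩
    · exact le_trans (Finset.card_insert_le _ _) (by simp)
    · intro x hx
      simp only [Finset.coe_insert, Finset.coe_singleton, mem_insert_iff, mem_singleton_iff] at hx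
      rcases hx with rfl | rfl
      · exact ⟨le_refl 0, zero_le_one⟩
      · exact hq01
    · exact hμ0full _ (by simp) (by simp)
  · refine ⟨insert 0 (Finset.image wt Finset.univ), ?_, ?_, ?_⟩
    · refine le_trans (Finset.card_insert_le _ _) ?_
      have h2 := Finset.card_image_le (f := wt) (s := Finset.univ)
      simp only [Finset.card_univ, Fintype.card_fin] at h2
      omega
    · intro x hx
      simp only [Finset.coe_insert, mem_insert_iff, Finset.coe_image, Finset.coe_univ,
        image_univ, mem_range] at hx
      rcases hx with rfl | ⟨i, rfl⟩
      · exact ⟨le_refl 0, zero_le_one⟩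
      · exact hwtm i
    · rw [hμ1]
      refine atomMeas_full hm0.le hm1.le (by simp) ?_
      intro i
      refine Fin.cases ?_ ?_ i
      · simp [hu]
      · intro j
        simp [hu]
  · rw [regretTI, ← hp, ← hν, hqμ1, hqν, max_eq_left hq01.1, sub_zero]
end
end

section
/- In the no-data testing-an-innovation setup with fully known control distribution, assume q0 < 1/2. Then δ = 1 satisfies sup over μ1 of R(1,μ1) = q0, while every δ ∈ [0,1) satisfies sup over μ1 of R(δ,μ1) ≥ 1 − q0 > q0. Hence δ = 1 is the unique minimax regret rule, with maximal regret q0. -/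
open MeasureTheory Set
open scoped ENNReal

noncomputable section

/-- Regret in the no-data testing-an-innovation setup with fully known control
distribution `μ0`, at `r = 0`. -/
def regretKC (α : ℝ) (μ0 : Measure ℝ) (δ : ℝ) (μ1 : Measure ℝ) : ℝ :=
  max (quant α 0 μ0) (quant α 0 μ1) - quant α 0 (mix δ μ0 μ1)

/-- The set of regret values of the no-data rule `δ` over all states `μ1`. -/
def regretSetKC (α : ℝ) (μ0 : Measure ℝ) (δ : ℝ) : Set ℝ :=
  {v | ∃ μ1 : Measure ℝ, IsProb01 μ1 ∧ v = regretKC α μ0 δ μ1}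

/-- The set `{q ∈ [0, q0] : δ + (1 - δ)·F0(q) ≥ α}` whose least element is `q(δ)`. -/
def thresholdSet (α : ℝ) (μ0 : Measure ℝ) (q0 δ : ℝ) : Set ℝ :=
  {q | q ∈ Icc (0 : ℝ) q0 ∧ α ≤ δ + (1 - δ) * (μ0 (Icc 0 q)).toReal}

lemma quantSet_bddBelow (α : ℝ) (μ : Measure ℝ) : BddBelow (quantSet α μ) :=
  ⟨0, fun q hq => hq.1.1⟩

/-- Key lemma: the infimum of the quantile set is itself a quantile. -/
lemma sInf_quantSet_mem (α : ℝ) (hα : α ∈ Ioo (0 : ℝ) 1) (μ : Measure ℝ)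
    (h : IsProb01 μ) : sInf (quantSet α μ) ∈ quantSet α μ := by
  obtain ⟨hprob, h01⟩ := h
  have hfin : ∀ s : Set ℝ, μ s ≠ ⊤ := fun s => measure_ne_top μ s
  set A : Set ℝ := {q | q ∈ Icc (0:ℝ) 1 ∧ α ≤ (μ (Icc 0 q)).toReal} with hA
  have h1A : (1:ℝ) ∈ A := by
    refine ⟨⟨zero_le_one, le_refl 1⟩, ?_⟩
    rw [h01]; simp [hα.2.le]
  have hAne : A.Nonempty := ⟨1, h1A⟩
  have hAbdd : BddBelow A := ⟨0, fun q hq => hq.1.1⟩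
  set q : ℝ := sInf A with hqdef
  have hq0 : 0 ≤ q := le_csInf hAne fun x hx => hx.1.1
  have hq1 : q ≤ 1 := csInf_le hAbdd h1A
  -- condition 1 at q
  have hcond1 : α ≤ (μ (Icc 0 q)).toReal := by
    have hinter : Icc (0:ℝ) q = ⋂ n : ℕ, Icc 0 (q + 1/(n+1)) := by
      ext x
      simp only [mem_Icc, mem_iInter]
      constructor
      · rintro ⟨hx0, hxq⟩ n
        refine ⟨hx0, hxq.trans ?_⟩
        have : (0:ℝ) < 1/((n:ℝ)+1) := by positivity
        linarith
      · intro hx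
        refine ⟨(hx 0).1, ?_⟩
        by_contra hcon
        push_neg at hcon
        obtain ⟨n, hn⟩ := exists_nat_one_div_lt (sub_pos.mpr hcon)
        have := (hx n).2
        have : x ≤ q + 1/(n+1) := this
        linarith [hn]
    have hanti : Antitone (fun n : ℕ => Icc (0:ℝ) (q + 1/(n+1))) := by
      intro m n hmn
      apply Icc_subset_Icc le_rfl
      have : (1:ℝ)/(n+1) ≤ 1/(m+1) := by
        apply one_div_le_one_div_of_le (by positivity)
        exact_mod_cast add_le_add_left (Nat.cast_le.mpr hmn) 1
      linarith
    have htend := tendsto_measure_iInter_atTop (μ := μ)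
      (fun n => (measurableSet_Icc).nullMeasurableSet) hanti ⟨0, hfin _⟩
    rw [← hinter] at htend
    have hge : ∀ n : ℕ, ENNReal.ofReal α ≤ μ (Icc 0 (q + 1/(n+1))) := by
      intro n
      have : sInf A < q + 1/(n+1) := by
        rw [← hqdef]
        have : (0:ℝ) < 1/((n:ℝ)+1) := by positivity
        linarith
      obtain ⟨x, hxA, hxlt⟩ := exists_lt_of_csInf_lt hAne this
      calc ENNReal.ofReal α ≤ μ (Icc 0 x) := ENNReal.ofReal_le_of_le_toReal hxA.2
        _ ≤ _ := measure_mono (Icc_subset_Icc le_rfl hxlt.le)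
    have hle : ENNReal.ofReal α ≤ μ (Icc 0 q) :=
      ge_of_tendsto htend (Filter.Eventually.of_forall hge)
    calc α = (ENNReal.ofReal α).toReal := (ENNReal.toReal_ofReal hα.1.le).symm
      _ ≤ _ := ENNReal.toReal_mono (hfin _) hle
  -- condition 2 at q
  have hcond2 : 1 - α ≤ (μ (Icc q 1)).toReal := by
    have hIco : μ (Ico 0 q) ≤ ENNReal.ofReal α := by
      have hunion : Ico (0:ℝ) q = ⋃ n : ℕ, Icc 0 (q - 1/(n+1)) := by
        ext x
        simp only [mem_Ico, mem_iUnion, mem_Icc]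
        constructor
        · rintro ⟨hx0, hxq⟩
          obtain ⟨n, hn⟩ := exists_nat_one_div_lt (sub_pos.mpr hxq)
          exact ⟨n, hx0, by linarith⟩
        · rintro ⟨n, hx0, hxle⟩
          have : (0:ℝ) < 1/(n+1) := by positivity
          exact ⟨hx0, by linarith⟩
      have hmono : Monotone (fun n : ℕ => Icc (0:ℝ) (q - 1/(n+1))) := by
        intro m n hmn
        apply Icc_subset_Icc le_rfl
        have : (1:ℝ)/(n+1) ≤ 1/(m+1) := by
          apply one_div_le_one_div_of_le (by positivity)
          exact_mod_cast add_le_add_left (Nat.cast_le.mpr hmn) 1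
        linarith
      have htend := tendsto_measure_iUnion_atTop (μ := μ) hmono
      rw [← hunion] at htend
      refine le_of_tendsto htend (Filter.Eventually.of_forall fun n => ?_)
      simp only [Function.comp_apply]
      rcases lt_or_ge (q - 1/(n+1)) 0 with hneg | hpos
      · rw [Icc_eq_empty (by linarith)]; simp
      · have hlt : q - 1/(n+1) < q := by
          have : (0:ℝ) < 1/(n+1) := by positivity
          linarith
        have hnotA : q - 1/(n+1) ∉ A := notMem_of_lt_csInf hlt hAbdd
        have hmem01 : q - 1/(n+1) ∈ Icc (0:ℝ) 1 := ⟨hpos, by linarith⟩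
        have : ¬ α ≤ (μ (Icc 0 (q - 1/(n+1)))).toReal := fun hc => hnotA ⟨hmem01, hc⟩
        push_neg at this
        exact ENNReal.le_ofReal_iff_toReal_le (hfin _) hα.1.le |>.mpr this.le
    have hcover : Icc (0:ℝ) 1 ⊆ Ico 0 q ∪ Icc q 1 := by
      intro x hx
      rcases lt_or_ge x q with h | h
      · exact Or.inl ⟨hx.1, h⟩
      · exact Or.inr ⟨h, hx.2⟩
    have h1le : (1:ℝ≥0∞) ≤ ENNReal.ofReal α + μ (Icc q 1) := by
      calc (1:ℝ≥0∞) = μ (Icc 0 1) := h01.symm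
        _ ≤ μ (Ico 0 q ∪ Icc q 1) := measure_mono hcover
        _ ≤ μ (Ico 0 q) + μ (Icc q 1) := measure_union_le _ _
        _ ≤ ENNReal.ofReal α + μ (Icc q 1) := add_le_add_left hIco _
    have hsum : ENNReal.ofReal (1 - α) + ENNReal.ofReal α = 1 := by
      rw [← ENNReal.ofReal_add (by linarith [hα.2]) hα.1.le]
      norm_num
    have : ENNReal.ofReal (1 - α) ≤ μ (Icc q 1) := by
      have h2 : ENNReal.ofReal (1 - α) + ENNReal.ofReal α ≤ μ (Icc q 1) + ENNReal.ofReal α := by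
        rw [hsum]; rw [add_comm (μ _)]; exact h1le
      exact ENNReal.le_of_add_le_add_right ENNReal.ofReal_ne_top h2
    calc 1 - α = (ENNReal.ofReal (1-α)).toReal := by
          rw [ENNReal.toReal_ofReal (by linarith [hα.2])]
      _ ≤ _ := ENNReal.toReal_mono (hfin _) this
  have hqmem : q ∈ quantSet α μ := ⟨⟨hq0, hq1⟩, hcond1, hcond2⟩
  have hsub : quantSet α μ ⊆ A := fun x hx => ⟨hx.1, hx.2.1⟩
  have heq : sInf (quantSet α μ) = q := by
    apply le_antisymm (csInf_le (quantSet_bddBelow α μ) hqmem)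
    exact le_csInf ⟨q, hqmem⟩ fun x hx => csInf_le hAbdd (hsub hx)
  rw [heq]; exact hqmem

lemma quant_eq (α : ℝ) (μ : Measure ℝ) : quant α 0 μ = sInf (quantSet α μ) := by
  simp [quant]

lemma quant_eq_of (α : ℝ) (μ : Measure ℝ) (c : ℝ) (hmem : c ∈ quantSet α μ)
    (hlb : ∀ x ∈ quantSet α μ, c ≤ x) : quant α 0 μ = c := by
  rw [quant_eq]
  exact le_antisymm (csInf_le (quantSet_bddBelow α μ) hmem) (le_csInf ⟨c, hmem⟩ hlb)

lemma Ber_apply (a : ℝ) (s : Set ℝ) :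
    Ber a s = ENNReal.ofReal a * s.indicator 1 0 + ENNReal.ofReal (1 - a) * s.indicator 1 1 := by
  simp [Ber, Measure.dirac_apply]

lemma isProb01_Ber (a : ℝ) (ha0 : 0 ≤ a) (ha1 : a ≤ 1) : IsProb01 (Ber a) := by
  have huniv : Ber a univ = 1 := by
    rw [Ber_apply]
    simp only [indicator_of_mem (mem_univ _), Pi.one_apply, mul_one]
    rw [← ENNReal.ofReal_add ha0 (by linarith)]
    norm_num
  constructor
  · exact ⟨huniv⟩
  · rw [Ber_apply]
    have h0 : (0:ℝ) ∈ Icc (0:ℝ) 1 := by norm_num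
    have h1 : (1:ℝ) ∈ Icc (0:ℝ) 1 := by norm_num
    rw [indicator_of_mem h0, indicator_of_mem h1]
    simp only [Pi.one_apply, mul_one]
    rw [← ENNReal.ofReal_add ha0 (by linarith)]
    norm_num

lemma isProb01_dirac0 : IsProb01 (Measure.dirac (0:ℝ)) := by
  constructor
  · infer_instance
  · rw [Measure.dirac_apply, indicator_of_mem (by norm_num : (0:ℝ) ∈ Icc (0:ℝ) 1)]
    rfl

lemma quant_dirac0 (α : ℝ) (hα : α ∈ Ioo (0:ℝ) 1) : quant α 0 (Measure.dirac (0:ℝ)) = 0 := by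
  apply quant_eq_of
  · refine ⟨by norm_num, ?_, ?_⟩
    · rw [Measure.dirac_apply, indicator_of_mem (by norm_num : (0:ℝ) ∈ Icc (0:ℝ) 0)]
      simp [hα.2.le]
    · rw [Measure.dirac_apply, indicator_of_mem (by norm_num : (0:ℝ) ∈ Icc (0:ℝ) 1)]
      simp; linarith [hα.1]
  · exact fun x hx => hx.1.1

lemma quant_Ber (α : ℝ) (hα : α ∈ Ioo (0:ℝ) 1) (a : ℝ) (ha0 : 0 ≤ a) (haα : a < α) :
    quant α 0 (Ber a) = 1 := by
  have ha1 : a ≤ 1 := le_of_lt (haα.trans hα.2)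
  have hmem : (1:ℝ) ∈ quantSet α (Ber a) := by
    refine ⟨by norm_num, ?_, ?_⟩
    · rw [Ber_apply, indicator_of_mem (by norm_num : (0:ℝ) ∈ Icc (0:ℝ) 1),
        indicator_of_mem (by norm_num : (1:ℝ) ∈ Icc (0:ℝ) 1)]
      simp only [Pi.one_apply, mul_one]
      rw [← ENNReal.ofReal_add ha0 (by linarith)]
      norm_num
      exact hα.2.le
    · rw [Ber_apply, indicator_of_notMem (by norm_num : (0:ℝ) ∉ Icc (1:ℝ) 1),
        indicator_of_mem (by norm_num : (1:ℝ) ∈ Icc (1:ℝ) 1)]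
      simp only [Pi.one_apply, mul_one, mul_zero, zero_add]
      rw [ENNReal.toReal_ofReal (by linarith)]
      linarith
  apply quant_eq_of α _ 1 hmem
  intro x hx
  by_contra hlt
  push_neg at hlt
  have hx0 : 0 ≤ x := hx.1.1
  have h1 : (Ber a (Icc 0 x)).toReal = a := by
    rw [Ber_apply, indicator_of_mem (by exact ⟨le_rfl, hx0⟩ : (0:ℝ) ∈ Icc (0:ℝ) x),
      indicator_of_notMem (by simp [hlt, not_le.mpr hlt] : (1:ℝ) ∉ Icc (0:ℝ) x)]
    simp only [Pi.one_apply, mul_one, mul_zero, add_zero]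
    exact ENNReal.toReal_ofReal ha0
  have := hx.2.1
  rw [h1] at this
  linarith

lemma mix_one (μ0 μ1 : Measure ℝ) : mix 1 μ0 μ1 = μ1 := by
  simp [mix]

lemma mix_toReal (p : ℝ) (hp0 : 0 ≤ p) (hp1 : p ≤ 1) (μ0 μ1 : Measure ℝ)
    (h0 : IsProb01 μ0) (h1 : IsProb01 μ1) (s : Set ℝ) :
    ((mix p μ0 μ1) s).toReal = p * (μ1 s).toReal + (1 - p) * (μ0 s).toReal := by
  haveI := h0.1; haveI := h1.1
  rw [mix]
  rw [Measure.add_apply, Measure.smul_apply, Measure.smul_apply, smul_eq_mul, smul_eq_mul]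
  rw [ENNReal.toReal_add (by finiteness) (by finiteness)]
  rw [ENNReal.toReal_mul, ENNReal.toReal_mul, ENNReal.toReal_ofReal hp0,
    ENNReal.toReal_ofReal (by linarith)]

lemma isProb01_mix (p : ℝ) (hp0 : 0 ≤ p) (hp1 : p ≤ 1) (μ0 μ1 : Measure ℝ)
    (h0 : IsProb01 μ0) (h1 : IsProb01 μ1) : IsProb01 (mix p μ0 μ1) := by
  haveI := h0.1; haveI := h1.1
  have key : ∀ s : Set ℝ, μ0 s = 1 → μ1 s = 1 → (mix p μ0 μ1) s = 1 := by
    intro s hs0 hs1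
    rw [mix, Measure.add_apply, Measure.smul_apply, Measure.smul_apply, smul_eq_mul,
      smul_eq_mul, hs0, hs1, mul_one, mul_one, ← ENNReal.ofReal_add hp0 (by linarith)]
    norm_num
  exact ⟨⟨key univ (measure_univ) (measure_univ)⟩, key _ h0.2 h1.2⟩


/-- no-data known-control setup with `q0 < 1/2`: the rule `δ = 1` has supremum
of regret `q0`; every `δ ∈ [0,1)` has supremum of regret at least `1 − q0 > q0`; hence `δ = 1`
is the unique minimax regret rule, with maximal regret `q0`. -/
theorem stmt14 (α : ℝ) (hα : α ∈ Ioo (0 : ℝ) 1)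
    (μ0 : Measure ℝ) (h0 : IsProb01 μ0)
    (q0 : ℝ) (hq0 : q0 = quant α 0 μ0)
    (hF : α < (μ0 (Icc 0 q0)).toReal) (hq : q0 < 1 / 2) :
    sSup (regretSetKC α μ0 1) = q0 ∧
    (∀ δ ∈ Ico (0 : ℝ) 1, 1 - q0 ≤ sSup (regretSetKC α μ0 δ)) ∧
    q0 < 1 - q0 ∧
    (∀ δ ∈ Icc (0 : ℝ) 1, sSup (regretSetKC α μ0 1) ≤ sSup (regretSetKC α μ0 δ)) ∧
    (∀ δ ∈ Ico (0 : ℝ) 1, sSup (regretSetKC α μ0 1) < sSup (regretSetKC α μ0 δ)) := by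
  have hα0 := hα.1
  have hα1 := hα.2
  have hq0mem : q0 ∈ quantSet α μ0 := by
    rw [hq0, quant_eq]; exact sInf_quantSet_mem α hα μ0 h0
  have hq00 : 0 ≤ q0 := hq0mem.1.1
  have hq01 : q0 ≤ 1 := hq0mem.1.2
  have hquant : ∀ μ1 : Measure ℝ, IsProb01 μ1 → quant α 0 μ1 ∈ Icc (0:ℝ) 1 := by
    intro μ1 h1; rw [quant_eq]; exact (sInf_quantSet_mem α hα μ1 h1).1
  -- Part A : supremum of regret for δ = 1 equals q0
  have hubA : ∀ v ∈ regretSetKC α μ0 1, v ≤ q0 := by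
    rintro v ⟨μ1, h1, rfl⟩
    have hq1 := hquant μ1 h1
    simp only [regretKC, mix_one, ← hq0]
    have h1' := hq1.1
    exact sub_le_iff_le_add.mpr (max_le (by linarith) (by linarith))
  have hmemA : q0 ∈ regretSetKC α μ0 1 := by
    refine ⟨Measure.dirac 0, isProb01_dirac0, ?_⟩
    simp only [regretKC, mix_one, quant_dirac0 α hα, ← hq0]
    rw [max_eq_left hq00, sub_zero]
  have hA : sSup (regretSetKC α μ0 1) = q0 :=
    le_antisymm (csSup_le ⟨q0, hmemA⟩ hubA) (le_csSup ⟨q0, hubA⟩ hmemA)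
  -- Part B : for δ < 1 the supremum of regret is at least 1 - q0
  have hB : ∀ δ ∈ Ico (0:ℝ) 1, 1 - q0 ≤ sSup (regretSetKC α μ0 δ) := by
    rintro δ ⟨hδ0, hδ1⟩
    set t := (μ0 (Icc 0 q0)).toReal with ht
    set a := max 0 ((α - (1-δ)*t)/δ) with hadef
    have ha0 : 0 ≤ a := le_max_left _ _
    have haα : a < α := by
      apply max_lt hα0
      rcases eq_or_lt_of_le hδ0 with h | h
      · rw [← h]; simpa using hα0
      · rw [div_lt_iff₀ h]; nlinarith
    have hδa : α ≤ δ*a + (1-δ)*t := by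
      rcases eq_or_lt_of_le hδ0 with h | h
      · rw [← h]; simpa using hF.le
      · have h1 : (α - (1-δ)*t)/δ ≤ a := le_max_right _ _
        have h2 := (div_le_iff₀ h).mp h1
        linarith
    have hBer := isProb01_Ber a ha0 (by linarith)
    have hq1 : quant α 0 (Ber a) = 1 := quant_Ber α hα a ha0 haα
    have hν : IsProb01 (mix δ μ0 (Ber a)) := isProb01_mix δ hδ0 hδ1.le μ0 _ h0 hBer
    have hq0ν : q0 ∈ quantSet α (mix δ μ0 (Ber a)) := by
      refine ⟨⟨hq00, hq01⟩, ?_, ?_⟩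
      · rw [mix_toReal δ hδ0 hδ1.le μ0 _ h0 hBer]
        have hBq : ((Ber a) (Icc 0 q0)).toReal = a := by
          rw [Ber_apply, indicator_of_mem (by exact ⟨le_rfl, hq00⟩ : (0:ℝ) ∈ Icc (0:ℝ) q0),
            indicator_of_notMem (fun hm => absurd hm.2 (by norm_num; linarith))]
          simp only [Pi.one_apply, mul_one, mul_zero, add_zero]
          exact ENNReal.toReal_ofReal ha0
        rw [hBq, ← ht]
        linarith
      · rw [mix_toReal δ hδ0 hδ1.le μ0 _ h0 hBer]
        have hB2 : 1 - a ≤ ((Ber a) (Icc q0 1)).toReal := by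
          rw [Ber_apply, indicator_of_mem (by exact ⟨hq01, le_rfl⟩ : (1:ℝ) ∈ Icc q0 1)]
          simp only [Pi.one_apply, mul_one]
          rcases le_or_gt q0 0 with h | h
          · rw [indicator_of_mem (by exact ⟨h, zero_le_one⟩ : (0:ℝ) ∈ Icc q0 1)]
            simp only [Pi.one_apply, mul_one]
            rw [← ENNReal.ofReal_add ha0 (by linarith), ENNReal.toReal_ofReal (by linarith)]
            linarith
          · rw [indicator_of_notMem (fun hm => absurd hm.1 (not_le.mpr h))]
            simp only [mul_zero, zero_add]
            rw [ENNReal.toReal_ofReal (by linarith)]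
        have hx : 1 - α ≤ ((Ber a) (Icc q0 1)).toReal := le_trans (by linarith) hB2
        have hμ02 := hq0mem.2.2
        have h3 := mul_le_mul_of_nonneg_left hx hδ0
        have h4 := mul_le_mul_of_nonneg_left hμ02 (by linarith : (0:ℝ) ≤ 1 - δ)
        nlinarith
    have hqν : quant α 0 (mix δ μ0 (Ber a)) ≤ q0 := by
      rw [quant_eq]; exact csInf_le (quantSet_bddBelow _ _) hq0ν
    have hubB : ∀ v ∈ regretSetKC α μ0 δ, v ≤ 1 := by
      rintro v ⟨μ1, h1, rfl⟩
      have hq1' := hquant μ1 h1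
      have hν' := hquant _ (isProb01_mix δ hδ0 hδ1.le μ0 μ1 h0 h1)
      simp only [regretKC, ← hq0]
      have := hν'.1
      have := hq1'.2
      exact sub_le_iff_le_add.mpr (max_le (by linarith) (by linarith))
    have hmemB : regretKC α μ0 δ (Ber a) ∈ regretSetKC α μ0 δ := ⟨Ber a, hBer, rfl⟩
    have hval : 1 - q0 ≤ regretKC α μ0 δ (Ber a) := by
      simp only [regretKC, hq1, ← hq0]
      rw [max_eq_right hq01]
      linarith
    exact le_trans hval (le_csSup ⟨1, hubB⟩ hmemB)
  have hC : q0 < 1 - q0 := by linarith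
  refine ⟨hA, hB, hC, ?_, ?_⟩
  · intro δ hδ
    rcases eq_or_lt_of_le hδ.2 with h | h
    · rw [h]
    · rw [hA]; linarith [hB δ ⟨hδ.1, h⟩]
  · intro δ hδ
    rw [hA]
    exact lt_of_lt_of_le hC (hB δ hδ)

-- #print axioms stmt14
end
end

section
/- Fixed-design setup with α ∈ (0,1) and r ∈ [0,1]. For every treatment rule δ, the supremum of R(δ,(μ0,μ1)) over all states (μ0, μ1) in which both μ0 and μ1 are absolutely continuous with respect to Lebesgue measure on [0,1] equals 1. -/
open MeasureTheory Set

noncomputable section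

/-- Law of the sample in the fixed design: the first `N0` coordinates are i.i.d. from `μ0`,
the last `N1` coordinates are i.i.d. from `μ1`. -/
def sampleLawFD (N0 N1 : ℕ) (μ0 μ1 : Measure ℝ) : Measure (Fin (N0 + N1) → ℝ) :=
  Measure.pi fun i => if (i : ℕ) < N0 then μ0 else μ1

/-- Regret of a treatment rule in the fixed design. -/
def regretFD (α r : ℝ) (N0 N1 : ℕ) (δ : (Fin (N0 + N1) → ℝ) → ℝ)
    (μ0 μ1 : Measure ℝ) : ℝ :=
  max (quant α r μ0) (quant α r μ1) -
    quant α r (mix (∫ w, δ w ∂(sampleLawFD N0 N1 μ0 μ1)) μ0 μ1)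

/-- The set of regret values of the rule `δ` over all states, fixed design. -/
def regretSetFD (α r : ℝ) (N0 N1 : ℕ) (δ : (Fin (N0 + N1) → ℝ) → ℝ) : Set ℝ :=
  {v | ∃ μ0 μ1 : Measure ℝ, IsProb01 μ0 ∧ IsProb01 μ1 ∧ v = regretFD α r N0 N1 δ μ0 μ1}

-- ===== auxiliary development =====

def ua (ε : ℝ) : Measure ℝ := (ENNReal.ofReal ε)⁻¹ • volume.restrict (Icc 0 ε)
def ub (ε : ℝ) : Measure ℝ := (ENNReal.ofReal ε)⁻¹ • volume.restrict (Icc (1-ε) 1)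

lemma ua_apply (ε a b : ℝ) : (ua ε) (Icc a b)
    = (ENNReal.ofReal ε)⁻¹ * ENNReal.ofReal (min b ε - max a 0) := by
  simp [ua, Measure.smul_apply, Measure.restrict_apply measurableSet_Icc, Icc_inter_Icc,
    Real.volume_Icc, max_comm, min_comm]

lemma ub_apply (ε a b : ℝ) : (ub ε) (Icc a b)
    = (ENNReal.ofReal ε)⁻¹ * ENNReal.ofReal (min b 1 - max a (1-ε)) := by
  simp [ub, Measure.smul_apply, Measure.restrict_apply measurableSet_Icc, Icc_inter_Icc,
    Real.volume_Icc, max_comm, min_comm]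

lemma hval {ε x : ℝ} (hε : 0 < ε) (hx : 0 ≤ x) :
    ((ENNReal.ofReal ε)⁻¹ * ENNReal.ofReal x).toReal = x / ε := by
  rw [ENNReal.toReal_mul, ENNReal.toReal_inv, ENNReal.toReal_ofReal hε.le,
    ENNReal.toReal_ofReal hx]
  field_simp

lemma hval' {ε x : ℝ} (hx : x ≤ 0) :
    ((ENNReal.ofReal ε)⁻¹ * ENNReal.ofReal x).toReal = 0 := by
  simp [ENNReal.ofReal_eq_zero.2 hx]

variable {ε : ℝ}

lemma ua_prob (hε : 0 < ε) : IsProbabilityMeasure (ua ε) := by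
  constructor
  rw [ua, Measure.smul_apply, Measure.restrict_apply_univ, Real.volume_Icc, smul_eq_mul,
    sub_zero]
  exact ENNReal.inv_mul_cancel (by simpa using hε) ENNReal.ofReal_ne_top

lemma ub_prob (hε : 0 < ε) : IsProbabilityMeasure (ub ε) := by
  constructor
  rw [ub, Measure.smul_apply, Measure.restrict_apply_univ, Real.volume_Icc, smul_eq_mul]
  rw [show (1 : ℝ) - (1 - ε) = ε by ring]
  exact ENNReal.inv_mul_cancel (by simpa using hε) ENNReal.ofReal_ne_top

lemma ua_icc01 (hε : 0 < ε) (hε1 : ε ≤ 1) : (ua ε) (Icc 0 1) = 1 := by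
  rw [ua_apply, min_eq_right hε1, max_self, sub_zero]
  exact ENNReal.inv_mul_cancel (by simpa using hε) ENNReal.ofReal_ne_top

lemma ub_icc01 (hε : 0 < ε) (hε1 : ε ≤ 1) : (ub ε) (Icc 0 1) = 1 := by
  rw [ub_apply, min_self, max_eq_right (by linarith)]
  rw [show (1 : ℝ) - (1 - ε) = ε by ring]
  exact ENNReal.inv_mul_cancel (by simpa using hε) ENNReal.ofReal_ne_top

-- toReal values of ua on intervals
lemma ua0 (hε : 0 < ε) {q : ℝ} (h0 : 0 ≤ q) (h1 : q ≤ ε) :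
    ((ua ε) (Icc 0 q)).toReal = q / ε := by
  rw [ua_apply, min_eq_left h1, max_self, sub_zero, hval hε h0]

lemma ua0' (hε : 0 < ε) {q : ℝ} (h1 : ε ≤ q) : ((ua ε) (Icc 0 q)).toReal = 1 := by
  rw [ua_apply, min_eq_right h1, max_self, sub_zero, hval hε hε.le, div_self hε.ne']

lemma ua1 (hε : 0 < ε) (hε1 : ε ≤ 1) {q : ℝ} (h0 : 0 ≤ q) (h1 : q ≤ ε) :
    ((ua ε) (Icc q 1)).toReal = (ε - q) / ε := by
  rw [ua_apply, min_eq_right hε1, max_eq_left h0, hval hε (by linarith)]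

lemma ua1' (hε : 0 < ε) (hε1 : ε ≤ 1) {q : ℝ} (h1 : ε ≤ q) :
    ((ua ε) (Icc q 1)).toReal = 0 := by
  rcases le_or_gt 0 q with h0 | h0
  · rw [ua_apply, min_eq_right hε1, max_eq_left h0, hval' (by linarith)]
  · linarith

-- toReal values of ub on intervals
lemma ub0 (hε : 0 < ε) (hε1 : ε ≤ 1) {q : ℝ} (h1 : q ≤ 1 - ε) :
    ((ub ε) (Icc 0 q)).toReal = 0 := by
  have : min q 1 - max 0 (1 - ε) ≤ 0 := by
    have := min_le_left q 1
    have := le_max_right (0:ℝ) (1 - ε)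
    linarith
  rw [ub_apply, hval' this]

lemma ub0' (hε : 0 < ε) (hε1 : ε ≤ 1) {q : ℝ} (h0 : 1 - ε ≤ q) (h1 : q ≤ 1) :
    ((ub ε) (Icc 0 q)).toReal = (q - (1 - ε)) / ε := by
  rw [ub_apply, min_eq_left h1, max_eq_right (by linarith), hval hε (by linarith)]

lemma ub1 (hε : 0 < ε) (hε1 : ε ≤ 1) {q : ℝ} (h1 : q ≤ 1 - ε) :
    ((ub ε) (Icc q 1)).toReal = 1 := by
  rw [ub_apply, min_self, max_eq_right h1]
  rw [show (1 : ℝ) - (1 - ε) = ε by ring, hval hε hε.le, div_self hε.ne']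

lemma ub1' (hε : 0 < ε) {q : ℝ} (h0 : 1 - ε ≤ q) (h1 : q ≤ 1) :
    ((ub ε) (Icc q 1)).toReal = (1 - q) / ε := by
  rw [ub_apply, min_self, max_eq_left h0, hval hε (by linarith)]

def KK (ε t : ℝ) : Measure ℝ := ENNReal.ofReal t • ua ε + ENNReal.ofReal (1-t) • ub ε

lemma KK_apply (ε t : ℝ) (S : Set ℝ) :
    (KK ε t) S = ENNReal.ofReal t * (ua ε) S + ENNReal.ofReal (1-t) * (ub ε) S := by
  simp [KK, Measure.add_apply, Measure.smul_apply, smul_eq_mul]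

lemma KK_toReal (hε : 0 < ε) {t : ℝ} (ht0 : 0 ≤ t) (ht1 : t ≤ 1) (S : Set ℝ) :
    ((KK ε t) S).toReal = t * ((ua ε) S).toReal + (1-t) * ((ub ε) S).toReal := by
  haveI := ua_prob hε
  haveI := ub_prob hε
  have ha : (ua ε) S ≠ ⊤ := (measure_lt_top _ _).ne
  have hb : (ub ε) S ≠ ⊤ := (measure_lt_top _ _).ne
  rw [KK_apply, ENNReal.toReal_add (ENNReal.mul_ne_top ENNReal.ofReal_ne_top ha)
    (ENNReal.mul_ne_top ENNReal.ofReal_ne_top hb), ENNReal.toReal_mul, ENNReal.toReal_mul,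
    ENNReal.toReal_ofReal ht0, ENNReal.toReal_ofReal (by linarith)]



lemma quantSet_subset (α : ℝ) (μ : Measure ℝ) : quantSet α μ ⊆ Icc 0 1 := fun _ hq => hq.1

lemma quant_mem_Icc {α r : ℝ} {μ : Measure ℝ} (hr : r ∈ Icc (0:ℝ) 1) {a b : ℝ}
    (ha : 0 ≤ a) (hb : b ≤ 1) (hsub : quantSet α μ ⊆ Icc a b)
    (hne : (quantSet α μ).Nonempty) : quant α r μ ∈ Icc a b := by
  obtain ⟨q, hq⟩ := hne
  have hbdd : BddAbove (quantSet α μ) := (bddAbove_Icc (a := a) (b := b)).mono hsub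
  have hbdd' : BddBelow (quantSet α μ) := bddBelow_Icc.mono hsub
  have h1 : sSup (quantSet α μ) ≤ b := csSup_le ⟨q, hq⟩ (fun x hx => (hsub hx).2)
  have h2 : a ≤ sSup (quantSet α μ) := le_trans (hsub hq).1 (le_csSup hbdd hq)
  have h3 : a ≤ sInf (quantSet α μ) := le_csInf ⟨q, hq⟩ (fun x hx => (hsub hx).1)
  have h4 : sInf (quantSet α μ) ≤ b := le_trans (csInf_le hbdd' hq) (hsub hq).2
  obtain ⟨hr0, hr1⟩ := hr
  unfold quant
  constructor
  · nlinarith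
  · nlinarith

lemma quant_mem_Icc01 (α r : ℝ) (hr : r ∈ Icc (0:ℝ) 1) (μ : Measure ℝ) :
    quant α r μ ∈ Icc (0:ℝ) 1 := by
  rcases eq_empty_or_nonempty (quantSet α μ) with h | h
  · simp [quant, h, Real.sSup_empty, Real.sInf_empty]
  · exact quant_mem_Icc hr le_rfl le_rfl (quantSet_subset α μ) h

lemma quantKK_low {α r ε : ℝ} (hε : 0 < ε) (hε2 : ε < 1/2) (hα : α ∈ Ioo (0:ℝ) 1)
    (hr : r ∈ Icc (0:ℝ) 1) {t : ℝ} (ht : α < t) (ht1 : t ≤ 1) :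
    quant α r (KK ε t) ∈ Icc 0 ε := by
  obtain ⟨hα0, hα1⟩ := hα
  have ht0 : 0 < t := lt_trans hα0 ht
  have hε1 : ε ≤ 1 := by linarith
  set q₀ := ε * α / t with hq₀
  have hq0pos : 0 < q₀ := by positivity
  have hq0lt : q₀ < ε := by
    rw [hq₀, div_lt_iff₀ ht0]
    nlinarith
  have hmem : q₀ ∈ quantSet α (KK ε t) := by
    refine ⟨⟨hq0pos.le, by linarith⟩, ?_, ?_⟩
    · rw [KK_toReal hε ht0.le ht1 _, ua0 hε hq0pos.le hq0lt.le,
        ub0 hε hε1 (by linarith)]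
      have hkey : t * (q₀ / ε) = α := by rw [hq₀]; field_simp
      rw [mul_zero, add_zero, hkey]
    · rw [KK_toReal hε ht0.le ht1 _, ua1 hε hε1 hq0pos.le hq0lt.le,
        ub1 hε hε1 (by linarith)]
      rw [hq₀]
      have : t * ((ε - ε * α / t) / ε) = t - α := by field_simp
      rw [this]; linarith
  have hsub : quantSet α (KK ε t) ⊆ Icc 0 ε := by
    intro q hq
    obtain ⟨⟨hq0, hq1⟩, _, h2⟩ := hq
    refine ⟨hq0, ?_⟩
    by_contra hcon
    push_neg at hcon
    rcases le_or_gt q (1 - ε) with hc | hc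
    · rw [KK_toReal hε ht0.le ht1 _, ua1' hε hε1 hcon.le, ub1 hε hε1 hc] at h2
      nlinarith
    · rw [KK_toReal hε ht0.le ht1 _, ua1' hε hε1 hcon.le, ub1' hε hc.le hq1] at h2
      have hle : (1 - q) / ε ≤ 1 := by
        rw [div_le_one hε]; linarith
      nlinarith
  exact quant_mem_Icc hr le_rfl hε1 hsub ⟨q₀, hmem⟩

lemma quantKK_high {α r ε : ℝ} (hε : 0 < ε) (hε2 : ε < 1/2) (hα : α ∈ Ioo (0:ℝ) 1)
    (hr : r ∈ Icc (0:ℝ) 1) {t : ℝ} (ht0 : 0 ≤ t) (ht : t < α) :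
    quant α r (KK ε t) ∈ Icc (1-ε) 1 := by
  obtain ⟨hα0, hα1⟩ := hα
  have ht1 : t < 1 := lt_trans ht hα1
  have h1t : 0 < 1 - t := by linarith
  have hε1 : ε ≤ 1 := by linarith
  set q₀ := 1 - ε * (1 - α) / (1 - t) with hq₀
  have key : 0 < ε * (1 - α) / (1 - t) := div_pos (by nlinarith) h1t
  have key2 : ε * (1 - α) / (1 - t) ≤ ε := by
    rw [div_le_iff₀ h1t]; nlinarith
  have hq0a : 1 - ε ≤ q₀ := by rw [hq₀]; linarith
  have hq0b : q₀ < 1 := by rw [hq₀]; linarith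
  have hmem : q₀ ∈ quantSet α (KK ε t) := by
    refine ⟨⟨by linarith, hq0b.le⟩, ?_, ?_⟩
    · rw [KK_toReal hε ht0 ht1.le _, ua0' hε (by linarith),
        ub0' hε hε1 hq0a hq0b.le]
      have : (q₀ - (1 - ε)) / ε = 1 - (1 - α) / (1 - t) := by
        rw [hq₀]; field_simp; ring
      rw [this]
      have : (1 - t) * (1 - (1 - α) / (1 - t)) = α - t := by field_simp; ring
      rw [mul_one, this]; linarith
    · rw [KK_toReal hε ht0 ht1.le _, ua1' hε hε1 (by linarith), ub1' hε hq0a hq0b.le]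
      have : (1 - q₀) / ε = (1 - α) / (1 - t) := by rw [hq₀]; field_simp; ring
      rw [this]
      have : (1 - t) * ((1 - α) / (1 - t)) = 1 - α := by field_simp
      rw [this]; linarith
  have hsub : quantSet α (KK ε t) ⊆ Icc (1-ε) 1 := by
    intro q hq
    obtain ⟨⟨hq0, hq1⟩, h1, _⟩ := hq
    refine ⟨?_, hq1⟩
    by_contra hcon
    push_neg at hcon
    rcases le_or_gt q ε with hc | hc
    · rw [KK_toReal hε ht0 ht1.le _, ua0 hε hq0 hc, ub0 hε hε1 hcon.le] at h1
      have hle : q / ε ≤ 1 := by rw [div_le_one hε]; linarith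
      nlinarith
    · rw [KK_toReal hε ht0 ht1.le _, ua0' hε hc.le, ub0 hε hε1 hcon.le] at h1
      nlinarith
  exact quant_mem_Icc hr (by linarith) le_rfl hsub ⟨q₀, hmem⟩



lemma KK_univ {ε t : ℝ} (hε : 0 < ε) (ht0 : 0 ≤ t) (ht1 : t ≤ 1) :
    (KK ε t) univ = 1 := by
  haveI := ua_prob hε
  haveI := ub_prob hε
  rw [KK_apply, measure_univ, measure_univ, mul_one, mul_one,
    ← ENNReal.ofReal_add ht0 (by linarith)]
  norm_num

lemma KK_prob {ε t : ℝ} (hε : 0 < ε) (ht0 : 0 ≤ t) (ht1 : t ≤ 1) :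
    IsProbabilityMeasure (KK ε t) := ⟨KK_univ hε ht0 ht1⟩

lemma KK_prob01 {ε t : ℝ} (hε : 0 < ε) (hε1 : ε ≤ 1) (ht0 : 0 ≤ t) (ht1 : t ≤ 1) :
    IsProb01 (KK ε t) := by
  refine ⟨KK_prob hε ht0 ht1, ?_⟩
  rw [KK_apply, ua_icc01 hε hε1, ub_icc01 hε hε1, mul_one, mul_one,
    ← ENNReal.ofReal_add ht0 (by linarith)]
  norm_num

lemma KK_ac (ε t : ℝ) : KK ε t ≪ volume := by
  intro S hS
  have h1 : (volume.restrict (Icc (0:ℝ) ε)) S = 0 :=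
    le_antisymm (le_trans (Measure.restrict_apply_le _ _) hS.le) zero_le
  have h2 : (volume.restrict (Icc (1-ε) (1:ℝ))) S = 0 :=
    le_antisymm (le_trans (Measure.restrict_apply_le _ _) hS.le) zero_le
  simp [KK_apply, ua, ub, Measure.smul_apply, h1, h2]

lemma mixKK {ε p t0 t1 : ℝ} (hp0 : 0 ≤ p) (hp1 : p ≤ 1) (ht00 : 0 ≤ t0) (ht01 : t0 ≤ 1)
    (ht10 : 0 ≤ t1) (ht11 : t1 ≤ 1) :
    mix p (KK ε t0) (KK ε t1) = KK ε (p * t1 + (1 - p) * t0) := by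
  unfold mix KK
  rw [smul_add, smul_add, smul_smul, smul_smul, smul_smul, smul_smul,
    ← ENNReal.ofReal_mul hp0, ← ENNReal.ofReal_mul hp0,
    ← ENNReal.ofReal_mul (by linarith : (0:ℝ) ≤ 1 - p),
    ← ENNReal.ofReal_mul (by linarith : (0:ℝ) ≤ 1 - p)]
  have e1 : ENNReal.ofReal (p * t1 + (1 - p) * t0)
      = ENNReal.ofReal (p * t1) + ENNReal.ofReal ((1 - p) * t0) :=
    ENNReal.ofReal_add (by nlinarith) (by nlinarith)
  have e2 : ENNReal.ofReal (1 - (p * t1 + (1 - p) * t0))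
      = ENNReal.ofReal (p * (1 - t1)) + ENNReal.ofReal ((1 - p) * (1 - t0)) := by
    rw [← ENNReal.ofReal_add (by nlinarith) (by nlinarith)]
    ring_nf
  rw [e1, e2, add_smul, add_smul]
  abel

lemma pi_smul {ι : Type*} [Fintype ι] {β : ι → Type*} [∀ i, MeasurableSpace (β i)]
    (c : ι → ENNReal) (hc : ∀ i, c i ≠ ⊤) (ν : ∀ i, Measure (β i))
    [∀ i, IsFiniteMeasure (ν i)] :
    Measure.pi (fun i => c i • ν i) = (∏ i, c i) • Measure.pi ν := by
  haveI : ∀ i, IsFiniteMeasure (c i • ν i) := fun i => by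
    constructor
    rw [Measure.smul_apply, smul_eq_mul]
    exact ENNReal.mul_lt_top (hc i).lt_top (measure_lt_top _ _)
  refine Measure.pi_eq (fun s hs => ?_)
  rw [Measure.smul_apply, Measure.pi_pi, smul_eq_mul, ← Finset.prod_mul_distrib]
  simp [Measure.smul_apply, smul_eq_mul]

lemma pi_restrict {ι : Type*} [Fintype ι] {β : ι → Type*} [∀ i, MeasurableSpace (β i)]
    (μ : ∀ i, Measure (β i)) [∀ i, IsFiniteMeasure (μ i)]
    (S : ∀ i, Set (β i)) (hS : ∀ i, MeasurableSet (S i)) :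
    Measure.pi (fun i => (μ i).restrict (S i)) = (Measure.pi μ).restrict (univ.pi S) := by
  haveI : ∀ i, IsFiniteMeasure ((μ i).restrict (S i)) := fun i => by
    constructor
    exact lt_of_le_of_lt (Measure.restrict_apply_le _ _) (measure_lt_top _ _)
  refine Measure.pi_eq (fun s hs => ?_)
  rw [Measure.restrict_apply (MeasurableSet.univ_pi hs), ← Set.pi_inter_distrib,
    Measure.pi_pi]
  exact Finset.prod_congr rfl fun i _ => (Measure.restrict_apply (hs i)).symm

lemma prod_ite_count {M : Type*} [CommMonoid M] (N0 N1 : ℕ) (c0 c1 : M) :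
    (∏ i : Fin (N0 + N1), if (i : ℕ) < N0 then c0 else c1) = c0 ^ N0 * c1 ^ N1 := by
  rw [← Equiv.prod_comp (finSumFinEquiv (m := N0) (n := N1))]
  rw [Fintype.prod_sum_type]
  congr 1
  · rw [Finset.prod_congr rfl fun i _ => ?_, Finset.prod_const, Finset.card_univ,
      Fintype.card_fin]
    rw [finSumFinEquiv_apply_left]
    simp [Fin.is_lt]
  · rw [Finset.prod_congr rfl fun i _ => ?_, Finset.prod_const, Finset.card_univ,
      Fintype.card_fin]
    rw [finSumFinEquiv_apply_right]
    simp



lemma KK_restrict {ε t : ℝ} (hε2 : ε < 1/2) :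
    (KK ε t).restrict (Icc 0 ε) = ENNReal.ofReal t • ua ε := by
  unfold KK
  rw [Measure.restrict_add, Measure.restrict_smul, Measure.restrict_smul]
  have ha : (ua ε).restrict (Icc 0 ε) = ua ε := by
    unfold ua
    rw [Measure.restrict_smul, Measure.restrict_restrict measurableSet_Icc, inter_self]
  have hb : (ub ε).restrict (Icc 0 ε) = 0 := by
    unfold ub
    rw [Measure.restrict_smul, Measure.restrict_restrict measurableSet_Icc, Icc_inter_Icc]
    have hemp : ¬ ((0:ℝ) ⊔ (1-ε) ≤ ε ⊓ 1) := by
      intro h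
      have h1 := le_trans (le_sup_right (a := (0:ℝ)) (b := 1-ε)) h
      have h2 := le_trans h1 (inf_le_left (a := ε) (b := (1:ℝ)))
      linarith
    rw [Icc_eq_empty hemp, Measure.restrict_empty, smul_zero]
  rw [ha, hb, smul_zero, add_zero]

lemma law_restrict {ε : ℝ} (hε : 0 < ε) (hε2 : ε < 1/2) (N0 N1 : ℕ) {t0 t1 : ℝ}
    (h00 : 0 ≤ t0) (h01 : t0 ≤ 1) (h10 : 0 ≤ t1) (h11 : t1 ≤ 1) :
    (sampleLawFD N0 N1 (KK ε t0) (KK ε t1)).restrict (univ.pi fun _ => Icc 0 ε)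
      = (ENNReal.ofReal t0 ^ N0 * ENNReal.ofReal t1 ^ N1)
          • Measure.pi (fun _ : Fin (N0+N1) => ua ε) := by
  haveI : ∀ i : Fin (N0+N1),
      IsFiniteMeasure ((fun i : Fin (N0+N1) =>
        if (i:ℕ) < N0 then KK ε t0 else KK ε t1) i) := fun i => by
    dsimp only
    split
    · haveI := KK_prob hε h00 h01; infer_instance
    · haveI := KK_prob hε h10 h11; infer_instance
  haveI := ua_prob hε
  unfold sampleLawFD
  rw [← pi_restrict _ _ (fun _ => measurableSet_Icc)]
  have hfun : (fun i : Fin (N0+N1) =>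
      ((if (i:ℕ) < N0 then KK ε t0 else KK ε t1)).restrict (Icc 0 ε))
      = fun i : Fin (N0+N1) =>
        (if (i:ℕ) < N0 then ENNReal.ofReal t0 else ENNReal.ofReal t1) • ua ε := by
    funext i
    split <;> rw [KK_restrict hε2]
  rw [hfun, pi_smul _ (fun i => by split <;> exact ENNReal.ofReal_ne_top) _,
    prod_ite_count]

lemma integ_rule {n : ℕ} {δ : (Fin n → ℝ) → ℝ} (hδm : Measurable δ)
    (hδ : ∀ w, δ w ∈ Icc (0:ℝ) 1) (P : Measure (Fin n → ℝ)) [IsProbabilityMeasure P] :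
    Integrable δ P := by
  refine (integrable_const (1:ℝ)).mono' hδm.aestronglyMeasurable ?_
  filter_upwards with w
  rw [Real.norm_eq_abs, abs_le]
  exact ⟨by linarith [(hδ w).1], (hδ w).2⟩

lemma integral_rule_mem {n : ℕ} {δ : (Fin n → ℝ) → ℝ} (hδm : Measurable δ)
    (hδ : ∀ w, δ w ∈ Icc (0:ℝ) 1) (P : Measure (Fin n → ℝ)) [IsProbabilityMeasure P] :
    (∫ w, δ w ∂P) ∈ Icc (0:ℝ) 1 := by
  constructor
  · exact integral_nonneg fun w => (hδ w).1
  · calc ∫ w, δ w ∂P ≤ ∫ _, (1:ℝ) ∂P :=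
          integral_mono (integ_rule hδm hδ P) (integrable_const 1) fun w => (hδ w).2
    _ = 1 := by simp



set_option maxHeartbeats 1000000 in
lemma key_exists (α r : ℝ) (hα : α ∈ Ioo (0 : ℝ) 1) (hr : r ∈ Icc (0 : ℝ) 1)
    (N0 N1 : ℕ) (δ : (Fin (N0 + N1) → ℝ) → ℝ) (hδm : Measurable δ)
    (hδ : ∀ w, δ w ∈ Icc (0 : ℝ) 1) {ε : ℝ} (hε : 0 < ε) (hε2 : ε < 1/2) :
    ∃ μ0 μ1 : Measure ℝ, IsProb01 μ0 ∧ IsProb01 μ1 ∧ μ0 ≪ volume ∧ μ1 ≪ volume ∧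
      1 - 2*ε ≤ regretFD α r N0 N1 δ μ0 μ1 := by
  obtain ⟨hα0, hα1⟩ := hα
  have hε1 : ε ≤ 1 := by linarith
  -- the constant C and the mixing weight s
  set C := (α/2)^(N0+N1) with hCdef
  have hC0 : 0 < C := by positivity
  set θ := min (α/2) ((1-α) * C/4) with hθdef
  have hθ0 : 0 < θ := lt_min (by linarith) (by nlinarith)
  have hθa : θ ≤ α/2 := min_le_left _ _
  have hθb : θ ≤ (1-α) * C/4 := min_le_right _ _
  set s := α - θ with hsdef
  have hs0 : 0 < s := by simp only [hsdef]; linarith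
  have hsα : s < α := by simp only [hsdef]; linarith
  have hs2 : α/2 ≤ s := by simp only [hsdef]; linarith
  have hs1 : s < 1 := by linarith
  set β := (α - s)/(1-s) with hβdef
  have h1s : 0 < 1 - s := by linarith
  have hβ0 : 0 < β := div_pos (by linarith) h1s
  have hβC : β ≤ C/4 := by
    have h1 : β ≤ θ / (1-α) := by
      rw [hβdef]
      have : α - s = θ := by rw [hsdef]; ring
      rw [this]
      exact div_le_div_of_nonneg_left hθ0.le (by linarith) (by linarith)
    have h2 : θ / (1-α) ≤ C/4 := by
      rw [div_le_iff₀ (by linarith : (0:ℝ) < 1-α)]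
      calc θ ≤ (1-α) * C/4 := hθb
      _ = C/4 * (1-α) := by ring
    linarith
  -- power bounds
  have hα2a : (0:ℝ) ≤ α/2 := by linarith
  have hα2b : α/2 ≤ 1 := by linarith
  have hCN0 : C ≤ s^N0 := by
    calc C ≤ (α/2)^N0 := pow_le_pow_of_le_one hα2a hα2b (Nat.le_add_right _ _)
    _ ≤ s^N0 := pow_le_pow_left₀ hα2a hs2 _
  have hCN1 : C ≤ s^N1 := by
    calc C ≤ (α/2)^N1 := pow_le_pow_of_le_one hα2a hα2b (Nat.le_add_left _ _)
    _ ≤ s^N1 := pow_le_pow_left₀ hα2a hs2 _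
  have hsN0 : 0 < s^N0 := pow_pos hs0 _
  have hsN1 : 0 < s^N1 := pow_pos hs0 _
  -- the two candidate sample laws
  haveI hL1 : IsProbabilityMeasure (sampleLawFD N0 N1 (KK ε 1) (KK ε s)) := by
    unfold sampleLawFD
    haveI : ∀ i : Fin (N0+N1), IsProbabilityMeasure
        ((fun i : Fin (N0+N1) => if (i:ℕ) < N0 then KK ε 1 else KK ε s) i) := fun i => by
      dsimp only
      split
      · exact KK_prob hε zero_le_one le_rfl
      · exact KK_prob hε hs0.le hs1.le
    infer_instance
  haveI hL2 : IsProbabilityMeasure (sampleLawFD N0 N1 (KK ε s) (KK ε 1)) := by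
    unfold sampleLawFD
    haveI : ∀ i : Fin (N0+N1), IsProbabilityMeasure
        ((fun i : Fin (N0+N1) => if (i:ℕ) < N0 then KK ε s else KK ε 1) i) := fun i => by
      dsimp only
      split
      · exact KK_prob hε hs0.le hs1.le
      · exact KK_prob hε zero_le_one le_rfl
    infer_instance
  set p1 := ∫ w, δ w ∂(sampleLawFD N0 N1 (KK ε 1) (KK ε s)) with hp1def
  set p2 := ∫ w, δ w ∂(sampleLawFD N0 N1 (KK ε s) (KK ε 1)) with hp2def
  have hp1m : p1 ∈ Icc (0:ℝ) 1 := integral_rule_mem hδm hδ _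
  have hp2m : p2 ∈ Icc (0:ℝ) 1 := integral_rule_mem hδm hδ _
  by_cases hwin : p1 < (1-α)/(1-s)
  · -- state (KK ε 1, KK ε s) wins
    refine ⟨KK ε 1, KK ε s, KK_prob01 hε hε1 zero_le_one le_rfl,
      KK_prob01 hε hε1 hs0.le hs1.le, KK_ac ε 1, KK_ac ε s, ?_⟩
    unfold regretFD
    rw [← hp1def, mixKK hp1m.1 hp1m.2 zero_le_one le_rfl hs0.le hs1.le]
    have hm : α < p1 * s + (1 - p1) * 1 := by
      rw [lt_div_iff₀ h1s] at hwin
      nlinarith [hwin]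
    have hm1 : p1 * s + (1 - p1) * 1 ≤ 1 := by nlinarith [hp1m.1, hs1]
    have hqm := quantKK_low hε hε2 ⟨hα0, hα1⟩ hr hm hm1
    have hq1 := quantKK_high hε hε2 ⟨hα0, hα1⟩ hr hs0.le hsα
    have hmax : 1 - ε ≤ max (quant α r (KK ε 1)) (quant α r (KK ε s)) :=
      le_trans hq1.1 (le_max_right _ _)
    have := hqm.2
    linarith
  · -- state (KK ε s, KK ε 1) wins
    push_neg at hwin
    have hsum : (1-α)/(1-s) + β = 1 := by
      rw [hβdef]
      field_simp
      ring
    have h1p1 : 1 - p1 ≤ β := by linarith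
    -- the common part: uniform measure on the low box
    haveI := ua_prob hε
    haveI : IsProbabilityMeasure (Measure.pi (fun _ : Fin (N0+N1) => ua ε)) := by
      infer_instance
    set η := Measure.pi (fun _ : Fin (N0+N1) => ua ε) with hηdef
    set a := ∫ w, δ w ∂η with hadef
    have ham : a ∈ Icc (0:ℝ) 1 := integral_rule_mem hδm hδ _
    set R := univ.pi (fun _ : Fin (N0+N1) => Icc (0:ℝ) ε) with hRdef
    have hres1 : (sampleLawFD N0 N1 (KK ε 1) (KK ε s)).restrict R
        = (ENNReal.ofReal s ^ N1) • η := by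
      have h := law_restrict hε hε2 N0 N1 zero_le_one le_rfl hs0.le hs1.le
      simp only [ENNReal.ofReal_one, one_pow, one_mul] at h
      exact h
    have hres2 : (sampleLawFD N0 N1 (KK ε s) (KK ε 1)).restrict R
        = (ENNReal.ofReal s ^ N0) • η := by
      have h := law_restrict hε hε2 N0 N1 hs0.le hs1.le zero_le_one le_rfl
      simp only [ENNReal.ofReal_one, one_pow, mul_one] at h
      exact h
    have hηsub : ∫ w, (1 - δ w) ∂η = 1 - a := by
      rw [integral_sub (integrable_const 1) (integ_rule hδm hδ η)]
      simp [hadef]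
    have hint1 : ∫ w in R, (1 - δ w) ∂(sampleLawFD N0 N1 (KK ε 1) (KK ε s))
        = s^N1 * (1 - a) := by
      rw [hres1, integral_smul_measure, hηsub, ENNReal.toReal_pow,
        ENNReal.toReal_ofReal hs0.le, smul_eq_mul]
    have hint2 : ∫ w in R, δ w ∂(sampleLawFD N0 N1 (KK ε s) (KK ε 1))
        = s^N0 * a := by
      rw [hres2, integral_smul_measure, ← hadef, ENNReal.toReal_pow,
        ENNReal.toReal_ofReal hs0.le, smul_eq_mul]
    have hcomp1 : s^N1 * (1 - a) ≤ 1 - p1 := by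
      have hle := setIntegral_le_integral (μ := sampleLawFD N0 N1 (KK ε 1) (KK ε s))
        (s := R) (f := fun w => 1 - δ w)
        ((integrable_const 1).sub (integ_rule hδm hδ _))
        (ae_of_all _ fun w => by simp; linarith [(hδ w).2])
      have hrhs : ∫ w, (1 - δ w) ∂(sampleLawFD N0 N1 (KK ε 1) (KK ε s)) = 1 - p1 := by
        rw [integral_sub (integrable_const 1) (integ_rule hδm hδ _)]
        simp [hp1def]
      rw [hint1, hrhs] at hle
      exact hle
    have hcomp2 : s^N0 * a ≤ p2 := by
      have hle := setIntegral_le_integral (μ := sampleLawFD N0 N1 (KK ε s) (KK ε 1))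
        (s := R) (f := fun w => δ w)
        (integ_rule hδm hδ _) (ae_of_all _ fun w => (hδ w).1)
      rw [hint2] at hle
      exact hle
    -- a is close to 1
    have hβa : 1 - a ≤ β / s^N1 := by
      rw [le_div_iff₀ hsN1]
      calc (1-a) * s^N1 = s^N1 * (1-a) := by ring
      _ ≤ 1 - p1 := hcomp1
      _ ≤ β := h1p1
    have hβs : β / s^N1 ≤ 1/4 := by
      rw [div_le_iff₀ hsN1]
      linarith
    have ha34 : 3/4 ≤ a := by linarith
    have hp2β : β < p2 := by
      have h1 : C * (3/4) ≤ s^N0 * a := by nlinarith [hC0, hCN0, ha34, ham.1]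
      linarith
    refine ⟨KK ε s, KK ε 1, KK_prob01 hε hε1 hs0.le hs1.le,
      KK_prob01 hε hε1 zero_le_one le_rfl, KK_ac ε s, KK_ac ε 1, ?_⟩
    unfold regretFD
    rw [← hp2def, mixKK hp2m.1 hp2m.2 hs0.le hs1.le zero_le_one le_rfl]
    have hβeq : β * (1-s) = α - s := by
      rw [hβdef]
      field_simp
    have hm : α < p2 * 1 + (1 - p2) * s := by nlinarith [hp2β, h1s]
    have hm1 : p2 * 1 + (1 - p2) * s ≤ 1 := by nlinarith [hp2m.2, h1s]
    have hqm := quantKK_low hε hε2 ⟨hα0, hα1⟩ hr hm hm1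
    have hq0 := quantKK_high hε hε2 ⟨hα0, hα1⟩ hr hs0.le hsα
    have hmax : 1 - ε ≤ max (quant α r (KK ε s)) (quant α r (KK ε 1)) :=
      le_trans hq0.1 (le_max_left _ _)
    have := hqm.2
    linarith


/-- fixed design with `α ∈ (0,1)`, `r ∈ [0,1]`: for every treatment rule the
supremum of regret over states whose marginals are absolutely continuous with respect to
Lebesgue measure equals 1. -/
theorem stmt17 (α r : ℝ) (hα : α ∈ Ioo (0 : ℝ) 1) (hr : r ∈ Icc (0 : ℝ) 1)
    (N0 N1 : ℕ) (δ : (Fin (N0 + N1) → ℝ) → ℝ) (hδm : Measurable δ)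
    (hδ : ∀ w, δ w ∈ Icc (0 : ℝ) 1) :
    sSup {v | ∃ μ0 μ1 : Measure ℝ, IsProb01 μ0 ∧ IsProb01 μ1 ∧
        μ0 ≪ volume ∧ μ1 ≪ volume ∧ v = regretFD α r N0 N1 δ μ0 μ1} = 1 := by
  set S := {v | ∃ μ0 μ1 : Measure ℝ, IsProb01 μ0 ∧ IsProb01 μ1 ∧
      μ0 ≪ volume ∧ μ1 ≪ volume ∧ v = regretFD α r N0 N1 δ μ0 μ1} with hSdef
  have hub : ∀ v ∈ S, v ≤ 1 := by
    rintro v ⟨μ0, μ1, h0, h1, _, _, rfl⟩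
    unfold regretFD
    have q0 := quant_mem_Icc01 α r hr μ0
    have q1 := quant_mem_Icc01 α r hr μ1
    have qm := quant_mem_Icc01 α r hr (mix (∫ w, δ w ∂(sampleLawFD N0 N1 μ0 μ1)) μ0 μ1)
    have hmax := max_le q0.2 q1.2
    linarith [qm.1]
  have key : ∀ ε : ℝ, 0 < ε → ε < 1/2 → ∃ v ∈ S, 1 - 2*ε ≤ v := by
    intro ε hε hε2
    obtain ⟨μ0, μ1, h0, h1, hac0, hac1, hreg⟩ :=
      key_exists α r hα hr N0 N1 δ hδm hδ hε hε2
    exact ⟨regretFD α r N0 N1 δ μ0 μ1, ⟨μ0, μ1, h0, h1, hac0, hac1, rfl⟩, hreg⟩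
  obtain ⟨v0, hv0S, _⟩ := key (1/4) (by norm_num) (by norm_num)
  have hbdd : BddAbove S := ⟨1, fun v hv => hub v hv⟩
  refine le_antisymm (csSup_le ⟨v0, hv0S⟩ hub) ?_
  by_contra hlt
  push_neg at hlt
  set d := 1 - sSup S with hddef
  have hd0 : 0 < d := by simp only [hddef]; linarith
  obtain ⟨v, hvS, hv⟩ := key (min (d/4) (1/4)) (lt_min (by linarith) (by norm_num))
    (lt_of_le_of_lt (min_le_right _ _) (by norm_num))
  have hvle : v ≤ sSup S := le_csSup hbdd hvS
  have : min (d/4) (1/4) ≤ d/4 := min_le_left _ _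
  linarith
end
end
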